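/- arXiv:1512.04589 — 3 statements merged into one kernel-verified Lean document; each statement's English description precedes it below -/
import Mathlib

section
/- Let E be a metric space. Then UC_b(E) ≠ C_b(E) (i.e., there exists a bounded continuous function on E which is not uniformly continuous) if and only if there exists a sequence {(x_n, y_n)} in E × E such that: (i) d(x_n, y_n) > 0 for all n and d(x_n, y_n) → 0; (ii) for every n, the distance from the pair set {x_n, y_n} to the union ⋃_{k>n} {x_k, y_k} is strictly positive; (iii) the sequence {x_n} has no convergent subsequence. -/
/-!
If `f` is continuous but not uniformly continuous, there are pairs `(xₙ, yₙ)` with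
`d(xₙ, yₙ) → 0` and `d(f xₙ, f yₙ) ≥ ε`. Continuity of `f` forbids `(xₙ)` from having a cluster
point, so every point stays eventually far from both `(xₙ)` and `(yₙ)`, and a subsequence makes
each pair far from all later ones.

Conversely, given such pairs, put a tent of height one at `yₙ`, of radius `rₙ → 0` small enough
that it misses every `xₘ` and every other `yₘ`. As `(yₙ)` has no cluster point the tents form a
locally finite family, so their sum (truncated at one) is a bounded continuous function equal to
`0` at each `xₙ` and `1` at each `yₙ`; it is not uniformly continuous.
-/

open Filter Topology Metric BoundedContinuousFunction

section ClusterPoints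

variable {ι X : Type*} [PseudoMetricSpace X] {l : Filter ι} {u v : ι → X} {a : X}

theorem not_mapClusterPt_iff_exists_eventually_le_dist :
    ¬ MapClusterPt a l u ↔ ∃ ε > 0, ∀ᶠ k in l, ε ≤ dist (u k) a := by
  simp only [nhds_basis_ball.mapClusterPt_iff_frequently, mem_ball, not_forall, not_frequently,
    not_lt, exists_prop]

theorem not_mapClusterPt_of_tendsto_dist_zero
    (huv : Tendsto (fun k => dist (u k) (v k)) l (𝓝 0)) (hu : ¬ MapClusterPt a l u) :
    ¬ MapClusterPt a l v := by
  obtain ⟨ε, hε, hfar⟩ := not_mapClusterPt_iff_exists_eventually_le_dist.1 hu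
  refine not_mapClusterPt_iff_exists_eventually_le_dist.2 ⟨ε / 2, half_pos hε, ?_⟩
  filter_upwards [hfar, (tendsto_order.1 huv).2 _ (half_pos hε)] with k hk hclose
  linarith [dist_triangle (u k) (v k) a]

theorem exists_tendsto_subseq_iff_exists_mapClusterPt {Y : Type*} [TopologicalSpace Y]
    [FirstCountableTopology Y] {u : ℕ → Y} :
    (∃ φ : ℕ → ℕ, StrictMono φ ∧ ∃ a, Tendsto (fun k => u (φ k)) atTop (𝓝 a)) ↔
      ∃ a, MapClusterPt a atTop u := by
  constructor
  · rintro ⟨φ, hφ, a, ha⟩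
    exact ⟨a, ha.mapClusterPt.of_comp hφ.tendsto_atTop⟩
  · rintro ⟨a, ha⟩
    obtain ⟨φ, hφ, hlim⟩ := ha.tendsto_subseq
    exact ⟨φ, hφ, a, hlim⟩

theorem locallyFinite_ball_of_forall_not_mapClusterPt {c : ℕ → X} {r : ℕ → ℝ}
    (hc : ∀ a, ¬ MapClusterPt a atTop c) (hr : Tendsto r atTop (𝓝 0)) :
    LocallyFinite fun n => ball (c n) (r n) := by
  intro a
  obtain ⟨ε, hε, hfar⟩ := not_mapClusterPt_iff_exists_eventually_le_dist.1 (hc a)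
  have hsmall : ∀ᶠ n in atTop, r n < ε / 2 := (tendsto_order.1 hr).2 _ (half_pos hε)
  rw [← Nat.cofinite_eq_atTop] at hfar hsmall
  refine ⟨ball a (ε / 2), ball_mem_nhds a (half_pos hε),
    (eventually_cofinite.1 (hfar.and hsmall)).subset ?_⟩
  rintro n ⟨q, hqc, hqa⟩ ⟨hn, hrn⟩
  rw [mem_ball] at hqc hqa
  linarith [dist_triangle (c n) q a, dist_comm q (c n)]

end ClusterPoints

section Sequences

variable {X Y : Type*} [PseudoMetricSpace X] [PseudoMetricSpace Y]

theorem not_uniformContinuous_iff_exists_seq {f : X → Y} :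
    ¬ UniformContinuous f ↔ ∃ ε > 0, ∃ x y : ℕ → X,
      Tendsto (fun n => dist (x n) (y n)) atTop (𝓝 0) ∧ ∀ n, ε ≤ dist (f (x n)) (f (y n)) := by
  rw [Metric.uniformContinuous_iff]
  push Not
  constructor
  · rintro ⟨ε, hε, h⟩
    choose x y hxy hfar using fun n : ℕ => h (1 / (n + 1)) Nat.one_div_pos_of_nat
    exact ⟨ε, hε, x, y, squeeze_zero (fun n => dist_nonneg) (fun n => (hxy n).le)
      tendsto_one_div_add_atTop_nhds_zero_nat, hfar⟩
  · rintro ⟨ε, hε, x, y, hxy, hfar⟩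
    refine ⟨ε, hε, fun δ hδ => ?_⟩
    obtain ⟨n, hn⟩ := ((tendsto_order.1 hxy).2 δ hδ).exists
    exact ⟨x n, y n, hn, hfar n⟩

theorem Continuous.not_mapClusterPt_of_le_dist {f : X → Y} (hf : Continuous f) {x y : ℕ → X}
    (hxy : Tendsto (fun n => dist (x n) (y n)) atTop (𝓝 0)) {ε : ℝ} (hε : 0 < ε)
    (hfar : ∀ n, ε ≤ dist (f (x n)) (f (y n))) (a : X) : ¬ MapClusterPt a atTop x := by
  intro ha
  obtain ⟨φ, hφ, hxφ⟩ := ha.tendsto_subseq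
  have hyφ : Tendsto (y ∘ φ) atTop (𝓝 a) := hxφ.congr_dist (hxy.comp hφ.tendsto_atTop)
  have hfφ : Tendsto (fun k => dist (f (x (φ k))) (f (y (φ k)))) atTop (𝓝 0) := by
    simpa using ((hf.tendsto a).comp hxφ).dist ((hf.tendsto a).comp hyφ)
  exact hε.not_ge (ge_of_tendsto' hfφ fun k => hfar (φ k))

theorem exists_pos_eventually_separated {x y : ℕ → X}
    (hxy : Tendsto (fun n => dist (x n) (y n)) atTop (𝓝 0))
    (hx : ∀ a, ¬ MapClusterPt a atTop x) (n : ℕ) :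
    ∃ δ > 0, ∀ᶠ k in atTop, δ ≤ dist (x n) (x k) ∧ δ ≤ dist (x n) (y k) ∧
      δ ≤ dist (y n) (x k) ∧ δ ≤ dist (y n) (y k) := by
  have hfar (a : X) : ∃ ε > 0, ∀ᶠ k in atTop, ε ≤ dist a (x k) ∧ ε ≤ dist a (y k) := by
    obtain ⟨ε₁, hε₁, h₁⟩ := not_mapClusterPt_iff_exists_eventually_le_dist.1 (hx a)
    obtain ⟨ε₂, hε₂, h₂⟩ := not_mapClusterPt_iff_exists_eventually_le_dist.1
      (not_mapClusterPt_of_tendsto_dist_zero hxy (hx a))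
    refine ⟨min ε₁ ε₂, lt_min hε₁ hε₂, ?_⟩
    filter_upwards [h₁, h₂] with k hk₁ hk₂
    rw [dist_comm a, dist_comm a]
    exact ⟨(min_le_left _ _).trans hk₁, (min_le_right _ _).trans hk₂⟩
  obtain ⟨ε, hε, hxn⟩ := hfar (x n)
  obtain ⟨η, hη, hyn⟩ := hfar (y n)
  refine ⟨min ε η, lt_min hε hη, ?_⟩
  filter_upwards [hxn, hyn] with k ⟨h₁, h₂⟩ ⟨h₃, h₄⟩
  exact ⟨(min_le_left _ _).trans h₁, (min_le_left _ _).trans h₂,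
    (min_le_right _ _).trans h₃, (min_le_right _ _).trans h₄⟩

end Sequences

theorem exists_separated_pairs_of_not_uniformContinuous {X Y : Type*} [MetricSpace X]
    [PseudoMetricSpace Y] {f : X → Y}
    (hf : Continuous f) (hu : ¬ UniformContinuous f) :
    ∃ x y : ℕ → X,
      ((∀ n, 0 < dist (x n) (y n)) ∧ Tendsto (fun n => dist (x n) (y n)) atTop (𝓝 0)) ∧
      (∀ n, ∃ δ > (0 : ℝ), ∀ k, n < k →
        δ ≤ dist (x n) (x k) ∧ δ ≤ dist (x n) (y k) ∧
        δ ≤ dist (y n) (x k) ∧ δ ≤ dist (y n) (y k)) ∧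
      ¬ ∃ φ : ℕ → ℕ, StrictMono φ ∧ ∃ a : X, Tendsto (fun k => x (φ k)) atTop (𝓝 a) := by
  obtain ⟨ε, hε, x, y, hxy, hfar⟩ := not_uniformContinuous_iff_exists_seq.1 hu
  have hx := hf.not_mapClusterPt_of_le_dist hxy hε hfar
  choose δ hδ hsep using exists_pos_eventually_separated hxy hx
  obtain ⟨φ, hφ, hφsep, -⟩ := hasAntitoneBasis_atTop.subbasis_with_rel hsep
  refine ⟨x ∘ φ, y ∘ φ, ⟨fun n => dist_pos.2 fun h => ?_, hxy.comp hφ.tendsto_atTop⟩,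
    fun n => ⟨δ (φ n), hδ _, fun k hk => hφsep hk⟩, ?_⟩
  · exact (hε.trans_le (hfar (φ n))).ne' (by rw [show x (φ n) = y (φ n) from h, dist_self])
  · rw [exists_tendsto_subseq_iff_exists_mapClusterPt]
    rintro ⟨a, ha⟩
    exact hx a (ha.of_comp hφ.tendsto_atTop)

section Tents

variable {X : Type*} [PseudoMetricSpace X]

noncomputable def tent (c : X) (r : ℝ) (p : X) : ℝ := max 0 (1 - dist p c / r)

theorem continuous_tent (c : X) (r : ℝ) : Continuous (tent c r) := by
  unfold tent; fun_prop

theorem tent_nonneg (c : X) (r : ℝ) (p : X) : 0 ≤ tent c r p := le_max_left _ _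

theorem tent_self (c : X) (r : ℝ) : tent c r c = 1 := by simp [tent]

theorem tent_eq_zero {c p : X} {r : ℝ} (hr : 0 < r) (h : r ≤ dist p c) : tent c r p = 0 :=
  max_eq_left <| sub_nonpos.2 <| (one_le_div hr).2 h

theorem support_tent_subset {c : X} {r : ℝ} (hr : 0 < r) :
    Function.support (tent c r) ⊆ ball c r :=
  fun _ hp => not_le.1 fun h => hp (tent_eq_zero hr h)

theorem exists_boundedContinuousFunction_eq_zero_eq_one {x y : ℕ → X} {r : ℕ → ℝ}
    (hr : ∀ n, 0 < r n) (hr₀ : Tendsto r atTop (𝓝 0)) (hy : ∀ a, ¬ MapClusterPt a atTop y)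
    (hxy : ∀ m n, r n ≤ dist (x m) (y n)) (hyy : ∀ m n, m ≠ n → r n ≤ dist (y m) (y n)) :
    ∃ F : X →ᵇ ℝ, (∀ n, F (x n) = 0) ∧ ∀ n, F (y n) = 1 := by
  have hS : Continuous fun p => ∑ᶠ n, tent (y n) (r n) p :=
    continuous_finsum (fun n => continuous_tent _ _)
      ((locallyFinite_ball_of_forall_not_mapClusterPt hy hr₀).subset
        fun n => support_tent_subset (hr n))
  refine ⟨.ofNormedAddCommGroup _ ((continuous_const (y := (1 : ℝ))).min hS) 1 fun p => ?_,
    fun n => ?_, fun n => ?_⟩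
  · rw [Real.norm_of_nonneg (le_min zero_le_one (finsum_nonneg fun n => tent_nonneg _ _ _))]
    exact min_le_left _ _
  · change min 1 (∑ᶠ m, tent (y m) (r m) (x n)) = 0
    rw [finsum_eq_zero_of_forall_eq_zero fun m => tent_eq_zero (hr m) (hxy n m)]
    exact min_eq_right zero_le_one
  · change min 1 (∑ᶠ m, tent (y m) (r m) (y n)) = 1
    rw [finsum_eq_single _ n fun m hm => tent_eq_zero (hr m) (hyy n m hm.symm), tent_self,
      min_self]

end Tents

theorem exists_pos_minorant {d δ : ℕ → ℝ} (hd : ∀ n, 0 < d n) (hδ : ∀ n, 0 < δ n) :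
    ∃ r : ℕ → ℝ, ∀ n, 0 < r n ∧ r n ≤ d n ∧ ∀ m ≤ n, r n ≤ δ m := by
  refine ⟨fun n => min (d n) ((Finset.range (n + 1)).inf' Finset.nonempty_range_add_one δ),
    fun n => ⟨lt_min (hd n) ((Finset.lt_inf'_iff _).2 fun i _ => hδ i), min_le_left _ _,
      fun m hm => (min_le_right _ _).trans (Finset.inf'_le _ (Finset.mem_range_succ_iff.2 hm))⟩⟩

theorem exists_not_uniformContinuous_of_separated_pairs {X : Type*} [PseudoMetricSpace X]
    {x y : ℕ → X} (hpos : ∀ n, 0 < dist (x n) (y n))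
    (hxy : Tendsto (fun n => dist (x n) (y n)) atTop (𝓝 0))
    (hsep : ∀ n, ∃ δ > (0 : ℝ), ∀ k, n < k →
      δ ≤ dist (x n) (x k) ∧ δ ≤ dist (x n) (y k) ∧
      δ ≤ dist (y n) (x k) ∧ δ ≤ dist (y n) (y k))
    (hno : ¬ ∃ φ : ℕ → ℕ, StrictMono φ ∧ ∃ a : X, Tendsto (fun k => x (φ k)) atTop (𝓝 a)) :
    ∃ F : X →ᵇ ℝ, ¬ UniformContinuous F := by
  have hx : ∀ a, ¬ MapClusterPt a atTop x := by
    simpa [exists_tendsto_subseq_iff_exists_mapClusterPt] using hno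
  choose δ hδ hsep using hsep
  obtain ⟨r, hr⟩ := exists_pos_minorant hpos hδ
  have hr₀ : Tendsto r atTop (𝓝 0) :=
    squeeze_zero (fun n => (hr n).1.le) (fun n => (hr n).2.1) hxy
  have hrx (m n : ℕ) : r n ≤ dist (x m) (y n) := by
    rcases lt_trichotomy m n with h | rfl | h
    · exact ((hr n).2.2 m h.le).trans (hsep m n h).2.1
    · exact (hr m).2.1
    · exact ((hr n).2.2 n le_rfl).trans (dist_comm (x m) (y n) ▸ (hsep n m h).2.2.1)
  have hry (m n : ℕ) (hmn : m ≠ n) : r n ≤ dist (y m) (y n) := by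
    rcases hmn.lt_or_gt with h | h
    · exact ((hr n).2.2 m h.le).trans (hsep m n h).2.2.2
    · exact ((hr n).2.2 n le_rfl).trans (dist_comm (y m) (y n) ▸ (hsep n m h).2.2.2)
  obtain ⟨F, hFx, hFy⟩ := exists_boundedContinuousFunction_eq_zero_eq_one (fun n => (hr n).1)
    hr₀ (fun a => not_mapClusterPt_of_tendsto_dist_zero hxy (hx a)) hrx hry
  refine ⟨F, not_uniformContinuous_iff_exists_seq.2 ⟨1, one_pos, x, y, hxy, fun n => ?_⟩⟩
  simp [hFx, hFy]

/-- UC_b(E) ≠ C_b(E) iff there is a sequence of pairs (x_n, y_n) with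
d(x_n,y_n) > 0 tending to 0, with each pair-set at positive distance from all later
pairs, and with {x_n} having no convergent subsequence. -/
theorem stmt12 {E : Type*} [MetricSpace E] :
    (∃ f : BoundedContinuousFunction E ℝ, ¬ UniformContinuous ⇑f) ↔
      ∃ x y : ℕ → E,
        ((∀ n, 0 < dist (x n) (y n)) ∧
          Tendsto (fun n => dist (x n) (y n)) atTop (𝓝 0)) ∧
        (∀ n, ∃ δ > (0 : ℝ), ∀ k, n < k →
          δ ≤ dist (x n) (x k) ∧ δ ≤ dist (x n) (y k) ∧
          δ ≤ dist (y n) (x k) ∧ δ ≤ dist (y n) (y k)) ∧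
        ¬ ∃ φ : ℕ → ℕ, StrictMono φ ∧ ∃ a : E,
            Tendsto (fun k => x (φ k)) atTop (𝓝 a) := by
  constructor
  · rintro ⟨f, hf⟩
    exact exists_separated_pairs_of_not_uniformContinuous f.continuous hf
  · rintro ⟨x, y, ⟨hpos, hxy⟩, hsep, hno⟩
    exact exists_not_uniformContinuous_of_separated_pairs hpos hxy hsep hno
end

section
/- Let E be a metric space. A sequence {f_n} in C_b(E) is norm-bounded and converges to f uniformly on every compact subset of E if and only if {f_n} is bounded and converges to f in the topology τ_K generated by the seminorms p_{K,μ}(g) = sup_{x∈K}|g(x)| + |∫_E g dμ| (K ⊆ E compact nonempty, μ ∈ ca(E)). -/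
/-!
`tauK E` is the infimum of the topologies induced by restriction to compact sets (with uniform
convergence) and by the functionals `f ↦ ∫ f dμ`. All of these are continuous for the sup norm, so
norm-bounded sets are `tauK`-bounded, and by dominated convergence a norm-bounded sequence that
converges uniformly on compacta (hence pointwise) converges against every `μ`.

Conversely, `tauK`-boundedness only says that each functional `f ↦ ∫ f dμ` is bounded on the
sequence. Testing against the signed measures `∑ₖ aₖ δ_{xₖ}` with `a ∈ ℓ¹` turns this into
pointwise boundedness of the operators `a ↦ ∑ₖ fₙ(xₖ) aₖ` on `ℓ¹`; Banach–Steinhaus bounds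
`|fₙ(xₖ)|` uniformly in `n` and `k`, and choosing `xₖ` where some `|fₙ|` exceeds `k` shows that
`‖fₙ‖` is bounded.
-/

open Filter Topology MeasureTheory

/-- Integration of a function against a finite countably additive signed Borel measure,
via its Jordan decomposition. -/
noncomputable def intSM' {E : Type*} [MeasurableSpace E]
    (s : SignedMeasure E) (f : E → ℝ) : ℝ :=
  (∫ x, f x ∂s.toJordanDecomposition.posPart) -
    ∫ x, f x ∂s.toJordanDecomposition.negPart

/-- The locally convex topology τ_K on C_b(E), generated by the seminorms
p_{K,μ}(f) = sup_{x∈K}|f(x)| + |∫ f dμ| over nonempty compact K and μ ∈ ca(E). -/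
noncomputable def tauK (E : Type*) [MetricSpace E] [MeasurableSpace E] [BorelSpace E] :
    TopologicalSpace (BoundedContinuousFunction E ℝ) :=
  (⨅ (K : Set E) (_ : IsCompact K) (_ : K.Nonempty),
      TopologicalSpace.induced
        (fun f : BoundedContinuousFunction E ℝ => UniformFun.ofFun fun x : K => f x)
        inferInstance) ⊓
    ⨅ s : SignedMeasure E,
      TopologicalSpace.induced (fun f : BoundedContinuousFunction E ℝ => intSM' s ⇑f)
        inferInstance

open scoped BoundedContinuousFunction NNReal ENNReal lp

section Integral

variable {E : Type*} [TopologicalSpace E] [MeasurableSpace E] [OpensMeasurableSpace E]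

noncomputable def intSM'LinearMap (s : SignedMeasure E) : (E →ᵇ ℝ) →ₗ[ℝ] ℝ where
  toFun f := intSM' s f
  map_add' f g := by
    simp only [intSM', BoundedContinuousFunction.coe_add, Pi.add_apply]
    rw [integral_add (f.integrable _) (g.integrable _),
      integral_add (f.integrable _) (g.integrable _)]
    ring
  map_smul' c f := by
    simp only [intSM', BoundedContinuousFunction.coe_smul, smul_eq_mul, integral_const_mul,
      RingHom.id_apply]
    ring

theorem abs_intSM'_le (s : SignedMeasure E) (f : E →ᵇ ℝ) :
    |intSM' s f| ≤ (s.toJordanDecomposition.posPart.real Set.univ +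
      s.toJordanDecomposition.negPart.real Set.univ) * ‖f‖ := by
  rw [intSM', add_mul]
  exact (abs_sub _ _).trans (add_le_add (f.norm_integral_le_mul_norm _)
    (f.norm_integral_le_mul_norm _))

theorem continuous_intSM' (s : SignedMeasure E) : Continuous fun f : E →ᵇ ℝ => intSM' s f :=
  AddMonoidHomClass.continuous_of_bound (intSM'LinearMap s) _ fun f => abs_intSM'_le s f

theorem intSM'_toSignedMeasure_sub (μ ν : Measure E) [IsFiniteMeasure μ] [IsFiniteMeasure ν]
    (f : E →ᵇ ℝ) :
    intSM' (μ.toSignedMeasure - ν.toSignedMeasure) f = ∫ x, f x ∂μ - ∫ x, f x ∂ν := by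
  set s := μ.toSignedMeasure - ν.toSignedMeasure with hs
  have hjordan := s.toSignedMeasure_toJordanDecomposition
  rw [JordanDecomposition.toSignedMeasure, hs] at hjordan
  -- `μ⁺ - μ⁻ = μ - ν`, rearranged so that integrals can be split with `integral_add_measure`
  have hsum : s.toJordanDecomposition.posPart + ν = μ + s.toJordanDecomposition.negPart := by
    rw [← Measure.toSignedMeasure_eq_toSignedMeasure_iff, Measure.toSignedMeasure_add,
      Measure.toSignedMeasure_add]
    linear_combination (norm := abel1) hjordan
  have := congrArg (fun m => ∫ x, f x ∂m) hsum
  simp only [integral_add_measure (f.integrable _) (f.integrable _)] at this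
  rw [intSM']
  linarith

theorem tendsto_intSM'_of_tendsto {ι : Type*} {l : Filter ι} [l.IsCountablyGenerated]
    (s : SignedMeasure E) {F : ι → E →ᵇ ℝ} {g : E →ᵇ ℝ} {C : ℝ} (hC : ∀ i, ‖F i‖ ≤ C)
    (hFg : ∀ x, Tendsto (fun i => F i x) l (𝓝 (g x))) :
    Tendsto (fun i => intSM' s (F i)) l (𝓝 (intSM' s g)) := by
  refine .sub ?_ ?_ <;>
    exact tendsto_integral_filter_of_dominated_convergence (fun _ => C)
      (.of_forall fun i => (F i).continuous.aestronglyMeasurable) (.of_forall fun i =>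
        .of_forall fun x => ((F i).norm_coe_le_norm x).trans (hC i))
      (integrable_const C) (.of_forall hFg)

end Integral

section TauK

variable {E : Type*} [MetricSpace E] [MeasurableSpace E] [BorelSpace E]

theorem norm_topology_le_tauK : (inferInstance : TopologicalSpace (E →ᵇ ℝ)) ≤ tauK E := by
  refine le_inf (le_iInf₂ fun K _ => le_iInf fun _ => continuous_iff_le_induced.1 ?_)
    (le_iInf fun s : SignedMeasure E => continuous_iff_le_induced.1 (continuous_intSM' s))
  exact UniformFun.precomp_uniformContinuous.continuous.comp
    BoundedContinuousFunction.isInducing_coeFn.continuous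

theorem tendsto_nhds_tauK_iff {ι : Type*} {l : Filter ι} {F : ι → E →ᵇ ℝ} {g : E →ᵇ ℝ} :
    Tendsto F l (@nhds _ (tauK E) g) ↔
      (∀ K : Set E, IsCompact K → K.Nonempty →
          TendstoUniformlyOn (fun i x => F i x) g l K) ∧
        ∀ s : SignedMeasure E, Tendsto (fun i => intSM' s (F i)) l (𝓝 (intSM' s g)) := by
  rw [tauK, nhds_inf (t₁ := iInf _) (t₂ := iInf _)]
  simp only [nhds_iInf, nhds_induced, tendsto_inf, tendsto_iInf,
    tendsto_comap_iff, Function.comp_def, UniformFun.tendsto_iff_tendstoUniformly,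
    UniformFun.toFun_ofFun, tendstoUniformlyOn_iff_tendstoUniformly_comp_coe]

theorem Bornology.IsVonNBounded.exists_abs_intSM'_le {S : Set (E →ᵇ ℝ)}
    (hS : @Bornology.IsVonNBounded ℝ _ _ _ _ (tauK E) S) (s : SignedMeasure E) :
    ∃ C, ∀ f ∈ S, |intSM' s f| ≤ C := by
  let := tauK E
  have hcont : Continuous (intSM'LinearMap s) :=
    continuous_iff_le_induced.2 (inf_le_right.trans (iInf_le _ s))
  exact (NormedSpace.image_isVonNBounded_iff ℝ).1 (hS.image ⟨intSM'LinearMap s, hcont⟩)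

end TauK

section DiracSeries

variable {E : Type*} [MeasurableSpace E]

noncomputable def diracSeries (x : ℕ → E) (c : ℕ → ℝ≥0) : Measure E :=
  Measure.sum fun k => (c k : ℝ≥0∞) • Measure.dirac (x k)

theorem isFiniteMeasure_diracSeries (x : ℕ → E) {c : ℕ → ℝ≥0} (hc : Summable c) :
    IsFiniteMeasure (diracSeries x c) := by
  constructor
  simp only [diracSeries, Measure.sum_apply _ MeasurableSet.univ, Measure.smul_apply,
    measure_univ, smul_eq_mul, mul_one]
  exact lt_top_iff_ne_top.2 (ENNReal.tsum_coe_ne_top_iff_summable.2 hc)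

variable [TopologicalSpace E] [OpensMeasurableSpace E]

theorem integral_diracSeries (x : ℕ → E) {c : ℕ → ℝ≥0} (hc : Summable c) (f : E →ᵇ ℝ) :
    ∫ y, f y ∂diracSeries x c = ∑' k, c k * f (x k) := by
  have := isFiniteMeasure_diracSeries x hc
  rw [diracSeries, integral_sum_measure (f.integrable (diracSeries x c))]
  simp [integral_dirac' _ _ f.continuous.stronglyMeasurable, NNReal.smul_def]

theorem exists_intSM'_eq_tsum (x : ℕ → E) {a : ℕ → ℝ} (ha : Summable a) :
    ∃ s : SignedMeasure E, ∀ f : E →ᵇ ℝ, intSM' s f = ∑' k, f (x k) * a k := by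
  have := isFiniteMeasure_diracSeries x ha.toNNReal
  have := isFiniteMeasure_diracSeries x ha.neg.toNNReal
  refine ⟨(diracSeries x fun k => (a k).toNNReal).toSignedMeasure -
    (diracSeries x fun k => (-a k).toNNReal).toSignedMeasure, fun f => ?_⟩
  have hsummable (c : ℕ → ℝ≥0) (hc : Summable c) : Summable fun k => (c k : ℝ) * f (x k) :=
    .of_norm_bounded (NNReal.summable_coe.2 hc |>.mul_right ‖f‖) fun k => by
      simpa [abs_mul] using mul_le_mul_of_nonneg_left (f.norm_coe_le_norm (x k)) (c k).2
  rw [intSM'_toSignedMeasure_sub, integral_diracSeries x ha.toNNReal,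
    integral_diracSeries x ha.neg.toNNReal, ← (hsummable _ ha.toNNReal).tsum_sub
    (hsummable _ ha.neg.toNNReal)]
  refine tsum_congr fun k => ?_
  rw [← sub_mul, Real.coe_toNNReal', Real.coe_toNNReal', max_zero_sub_max_neg_zero_eq_self,
    mul_comm]

end DiracSeries

section UniformBoundedness

variable {E : Type*} [TopologicalSpace E]

noncomputable def sampleCLM (x : ℕ → E) (f : E →ᵇ ℝ) : ℓ¹(ℕ, ℝ) →L[ℝ] ℝ :=
  (lp.tsumCLM ℝ ℕ ℝ).comp <| lp.mapCLM 1 (fun k => ContinuousLinearMap.mul ℝ ℝ (f (x k)))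
    (norm_nonneg f) fun k => (ContinuousLinearMap.opNorm_mul_apply_le _ _ _).trans
      (f.norm_coe_le_norm (x k))

theorem sampleCLM_apply (x : ℕ → E) (f : E →ᵇ ℝ) (a : ℓ¹(ℕ, ℝ)) :
    sampleCLM x f a = ∑' k, f (x k) * a k :=
  rfl

theorem abs_apply_le_norm_sampleCLM (x : ℕ → E) (f : E →ᵇ ℝ) (k : ℕ) :
    |f (x k)| ≤ ‖sampleCLM x f‖ := by
  have hsingle : sampleCLM x f (lp.single 1 k 1) = f (x k) := by
    rw [sampleCLM_apply, tsum_eq_single k fun j hj => by rw [lp.single_apply_ne 1 k _ hj,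
      mul_zero], lp.single_apply_self, mul_one]
  simpa [hsingle, lp.norm_single] using (sampleCLM x f).le_opNorm (lp.single 1 k 1)

variable [MeasurableSpace E] [OpensMeasurableSpace E]

theorem exists_abs_apply_le_of_forall_abs_intSM'_le {ι : Type*} {f : ι → E →ᵇ ℝ}
    (h : ∀ s : SignedMeasure E, ∃ C, ∀ i, |intSM' s (f i)| ≤ C) (x : ℕ → E) :
    ∃ C, ∀ i k, |f i (x k)| ≤ C := by
  have hpointwise (a : ℓ¹(ℕ, ℝ)) : ∃ C, ∀ i, ‖sampleCLM x (f i) a‖ ≤ C := by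
    obtain ⟨s, hs⟩ := exists_intSM'_eq_tsum x (lp.memℓp a).summable_of_one
    obtain ⟨C, hC⟩ := h s
    exact ⟨C, fun i => by simpa [sampleCLM_apply, hs] using hC i⟩
  obtain ⟨C, hC⟩ := banach_steinhaus hpointwise
  exact ⟨C, fun i k => (abs_apply_le_norm_sampleCLM x (f i) k).trans (hC i)⟩

theorem exists_norm_le_of_forall_abs_intSM'_le {ι : Type*} {f : ι → E →ᵇ ℝ}
    (h : ∀ s : SignedMeasure E, ∃ C, ∀ i, |intSM' s (f i)| ≤ C) : ∃ C, ∀ i, ‖f i‖ ≤ C := by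
  by_contra! hunbounded
  have hpoint (k : ℕ) : ∃ i x, (k : ℝ) < |f i x| := by
    obtain ⟨i, hi⟩ := hunbounded k
    by_contra! hle
    exact hi.not_ge ((f i).norm_le k.cast_nonneg |>.2 (hle i))
  choose i x hx using hpoint
  obtain ⟨C, hC⟩ := exists_abs_apply_le_of_forall_abs_intSM'_le h x
  obtain ⟨k, hk⟩ := exists_nat_gt C
  exact (hx k).not_ge ((hC (i k) k).trans hk.le)

end UniformBoundedness

/-- A sequence in C_b(E) is sup-norm bounded and converges uniformly on
every compact subset of E iff it is (von Neumann) bounded and convergent in τ_K. -/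
theorem stmt14 {E : Type*} [MetricSpace E] [MeasurableSpace E] [BorelSpace E]
    (f : ℕ → BoundedContinuousFunction E ℝ) (g : BoundedContinuousFunction E ℝ) :
    ((∃ C : ℝ, ∀ n, ‖f n‖ ≤ C) ∧
        ∀ K : Set E, K.Nonempty → IsCompact K →
          TendstoUniformlyOn (fun n x => f n x) (fun x => g x) atTop K) ↔
      (@Bornology.IsVonNBounded ℝ (BoundedContinuousFunction E ℝ) _ _ _ (tauK E)
          (Set.range f) ∧
        Tendsto f atTop (@nhds _ (tauK E) g)) := by
  rw [tendsto_nhds_tauK_iff]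
  constructor
  · rintro ⟨⟨C, hC⟩, huniform⟩
    have hbounded : Bornology.IsVonNBounded ℝ (Set.range f) :=
      (NormedSpace.isVonNBounded_iff' ℝ).2 ⟨C, Set.forall_mem_range.2 hC⟩
    have hpointwise (x : E) : Tendsto (fun n => f n x) atTop (𝓝 (g x)) :=
      (huniform {x} (Set.singleton_nonempty x) isCompact_singleton).tendsto_at rfl
    exact ⟨hbounded.of_topologicalSpace_le norm_topology_le_tauK,
      fun K hK hne => huniform K hne hK, fun s => tendsto_intSM'_of_tendsto s hC hpointwise⟩
  · rintro ⟨hbounded, huniform, -⟩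
    refine ⟨exists_norm_le_of_forall_abs_intSM'_le fun s => ?_, fun K hne hK => huniform K hK hne⟩
    obtain ⟨C, hC⟩ := hbounded.exists_abs_intSM'_le s
    exact ⟨C, fun n => hC _ (Set.mem_range_self n)⟩
end

section
/- Let E be a metric space. A sequence {f_n} in C_b(E) converges to f in the weak topology σ(C_b(E), ca(E)) and is bounded there if and only if sup_n ‖f_n‖_∞ < ∞ and f_n → f pointwise on E. -/
/-!
Testing weak convergence against Dirac masses gives pointwise convergence; conversely, a uniform
bound and pointwise convergence give convergence of the integrals against the two Jordan parts of
every signed measure, by dominated convergence, and a norm-bounded set is bounded for any coarser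
vector topology.

The substantial direction is that weak boundedness forces a sup-norm bound. A weakly bounded set
`S` has bounded integrals against every finite measure, in particular against the atomic measures
`∑ i, (a i)⁺ δ_{x i}` and `∑ i, (a i)⁻ δ_{x i}` for `a ∈ ℓ¹`. If `S` were unbounded we could pick
`h k ∈ S` and points `y k` with `k < |h k (y k)|`; the functionals `a ↦ ∑ i, h k (y i) * a i` on
`ℓ¹` are then pointwise bounded, so by Banach–Steinhaus their norms, which dominate every
`|h k (y i)|`, are bounded uniformly in `k`: a contradiction at `i = k`.
-/

open Filter Topology MeasureTheory

/-- The weak topology σ(C_b(E), ca(E)) on bounded continuous functions. -/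
noncomputable def tauSigma (E : Type*) [MetricSpace E] [MeasurableSpace E] [BorelSpace E] :
    TopologicalSpace (BoundedContinuousFunction E ℝ) :=
  ⨅ s : SignedMeasure E,
    TopologicalSpace.induced (fun f : BoundedContinuousFunction E ℝ => intSM' s ⇑f)
      inferInstance

open scoped lp NNReal ENNReal BoundedContinuousFunction

section LpOnePairing

variable {ι : Type*}

lemma lp.summable_norm_of_one (a : ℓ¹(ι, ℝ)) : Summable fun i => ‖a i‖ := by
  simpa using (lp.memℓp a).summable (p := 1) (by norm_num)

lemma lp.norm_eq_tsum_norm_of_one (a : ℓ¹(ι, ℝ)) : ‖a‖ = ∑' i, ‖a i‖ := by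
  simpa using lp.norm_eq_tsum_rpow (p := 1) (by norm_num) a

variable {c : ι → ℝ} {M : ℝ}

lemma summable_mul_of_abs_le (hc : ∀ i, |c i| ≤ M) (a : ℓ¹(ι, ℝ)) :
    Summable fun i => c i * a i :=
  ((lp.summable_norm_of_one a).mul_left M).of_norm_bounded fun i => by
    rw [norm_mul, Real.norm_eq_abs (c i)]
    exact mul_le_mul_of_nonneg_right (hc i) (norm_nonneg _)

noncomputable def lpOnePairing (c : ι → ℝ) (hc : ∀ i, |c i| ≤ M) : ℓ¹(ι, ℝ) →L[ℝ] ℝ :=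
  LinearMap.mkContinuous
    { toFun a := ∑' i, c i * a i
      map_add' a b := by
        simp only [lp.coeFn_add, Pi.add_apply, mul_add]
        exact (summable_mul_of_abs_le hc a).tsum_add (summable_mul_of_abs_le hc b)
      map_smul' r a := by
        simp only [lp.coeFn_smul, Pi.smul_apply, smul_eq_mul, mul_left_comm (c _),
          RingHom.id_apply]
        exact (summable_mul_of_abs_le hc a).tsum_mul_left r }
    M fun a => calc
      ‖∑' i, c i * a i‖ ≤ ∑' i, M * ‖a i‖ :=
        tsum_of_norm_bounded ((lp.summable_norm_of_one a).mul_left M).hasSum fun i => by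
          rw [norm_mul, Real.norm_eq_abs (c i)]
          exact mul_le_mul_of_nonneg_right (hc i) (norm_nonneg _)
      _ = M * ‖a‖ := by
        rw [tsum_mul_left, lp.norm_eq_tsum_norm_of_one]

lemma lpOnePairing_apply (hc : ∀ i, |c i| ≤ M) (a : ℓ¹(ι, ℝ)) :
    lpOnePairing c hc a = ∑' i, c i * a i := rfl

lemma lpOnePairing_single [DecidableEq ι] (hc : ∀ i, |c i| ≤ M) (i : ι) :
    lpOnePairing c hc (lp.single 1 i 1) = c i := by
  rw [lpOnePairing_apply, tsum_eq_single i fun j hj => by simp [Pi.single_eq_of_ne hj]]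
  simp

end LpOnePairing

theorem exists_abs_le_of_forall_bounded_tsum_mul {κ ι : Type*} (c : κ → ι → ℝ)
    (hc : ∀ n, ∃ M, ∀ i, |c n i| ≤ M)
    (h : ∀ a : ℓ¹(ι, ℝ), ∃ C, ∀ n, |∑' i, c n i * a i| ≤ C) :
    ∃ C, ∀ n i, |c n i| ≤ C := by
  classical
  choose M hM using hc
  have h' : ∀ a, ∃ C, ∀ n, ‖lpOnePairing (c n) (hM n) a‖ ≤ C := fun a => by
    obtain ⟨C, hC⟩ := h a
    exact ⟨C, fun n => (Real.norm_eq_abs _).trans_le (hC n)⟩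
  obtain ⟨C, hC⟩ := banach_steinhaus h'
  refine ⟨C, fun n i => ?_⟩
  have hsingle : ‖(lp.single 1 i 1 : ℓ¹(ι, ℝ))‖ = 1 := by
    rw [lp.norm_single (by norm_num), norm_one]
  calc |c n i| = ‖lpOnePairing (c n) (hM n) (lp.single 1 i 1)‖ := by
        rw [lpOnePairing_single, Real.norm_eq_abs]
    _ ≤ ‖lpOnePairing (c n) (hM n)‖ * ‖(lp.single 1 i 1 : ℓ¹(ι, ℝ))‖ :=
        ContinuousLinearMap.le_opNorm _ _
    _ ≤ C := by rw [hsingle, mul_one]; exact hC n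

lemma isFiniteMeasure_sum_smul_dirac {E ι : Type*} [MeasurableSpace E] {w : ι → ℝ≥0}
    (hw : Summable w) (x : ι → E) :
    IsFiniteMeasure (Measure.sum fun i => (w i : ℝ≥0∞) • Measure.dirac (x i)) := by
  constructor
  simp [Measure.sum_apply _ MeasurableSet.univ, ← ENNReal.coe_tsum hw]

lemma BoundedContinuousFunction.exists_lt_abs_apply {E : Type*} [TopologicalSpace E]
    {h : E →ᵇ ℝ} {r : ℝ} (hr : 0 ≤ r) (hrh : r < ‖h‖) : ∃ x, r < |h x| := by
  by_contra! H
  exact hrh.not_ge ((h.norm_le hr).mpr H)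

section FiniteMeasures

variable {E : Type*} [TopologicalSpace E] [MeasurableSpace E] [OpensMeasurableSpace E]

lemma intSM'_toSignedMeasure (μ : Measure E) [IsFiniteMeasure μ] (h : E →ᵇ ℝ) :
    intSM' μ.toSignedMeasure h = ∫ x, h x ∂μ := by
  set j := μ.toSignedMeasure.toJordanDecomposition
  have hj : μ + j.negPart = j.posPart := by
    have := μ.toSignedMeasure.toSignedMeasure_toJordanDecomposition
    rw [JordanDecomposition.toSignedMeasure, sub_eq_iff_eq_add] at this
    rw [← Measure.toSignedMeasure_eq_toSignedMeasure_iff, Measure.toSignedMeasure_add, this]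
  have := congrArg (fun ν => ∫ x, h x ∂ν) hj
  simp only [integral_add_measure (h.integrable _) (h.integrable _)] at this
  rw [intSM', ← this, add_sub_cancel_right]

noncomputable def BoundedContinuousFunction.integralCLM (μ : Measure E) [IsFiniteMeasure μ] :
    (E →ᵇ ℝ) →L[ℝ] ℝ :=
  LinearMap.mkContinuous
    { toFun h := ∫ x, h x ∂μ
      map_add' h h' := integral_add (h.integrable _) (h'.integrable _)
      map_smul' r _ := integral_smul r _ }
    (μ.real Set.univ) fun h => h.norm_integral_le_mul_norm μ

noncomputable def intSM'CLM (s : SignedMeasure E) : (E →ᵇ ℝ) →L[ℝ] ℝ :=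
  BoundedContinuousFunction.integralCLM s.toJordanDecomposition.posPart -
    BoundedContinuousFunction.integralCLM s.toJordanDecomposition.negPart

lemma tendsto_integral_of_norm_le_of_tendsto {ι : Type*} {l : Filter ι} [l.IsCountablyGenerated]
    (μ : Measure E) [IsFiniteMeasure μ] {f : ι → E →ᵇ ℝ} {g : E →ᵇ ℝ} {C : ℝ}
    (hC : ∀ n, ‖f n‖ ≤ C) (hfg : ∀ x, Tendsto (fun n => f n x) l (𝓝 (g x))) :
    Tendsto (fun n => ∫ x, f n x ∂μ) l (𝓝 (∫ x, g x ∂μ)) :=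
  tendsto_integral_filter_of_dominated_convergence (fun _ => C)
    (.of_forall fun n => (f n).continuous.measurable.aestronglyMeasurable)
    (.of_forall fun n => .of_forall fun x => ((f n).norm_coe_le_norm x).trans (hC n))
    (integrable_const C) (.of_forall hfg)

lemma hasSum_integral_sum_smul_dirac {ι : Type*} {w : ι → ℝ≥0}
    (hw : Summable w) (x : ι → E) (h : E →ᵇ ℝ) :
    HasSum (fun i => h (x i) * w i)
      (∫ y, h y ∂(Measure.sum fun i => (w i : ℝ≥0∞) • Measure.dirac (x i))) := by
  have := isFiniteMeasure_sum_smul_dirac hw x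
  simpa [integral_smul_measure, integral_dirac' _ _ h.continuous.stronglyMeasurable,
    NNReal.smul_def, mul_comm]
    using hasSum_integral_measure
      (h.integrable (Measure.sum fun i => (w i : ℝ≥0∞) • Measure.dirac (x i)))

lemma exists_bound_tsum_mul_of_forall_integral_bounded {S : Set (E →ᵇ ℝ)}
    (hS : ∀ (μ : Measure E) [IsFiniteMeasure μ], ∃ C, ∀ h ∈ S, |∫ x, h x ∂μ| ≤ C)
    {ι : Type*} (x : ι → E) {a : ι → ℝ} (ha : Summable a) :
    ∃ C, ∀ h ∈ S, |∑' i, h (x i) * a i| ≤ C := by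
  have := isFiniteMeasure_sum_smul_dirac ha.toNNReal x
  have := isFiniteMeasure_sum_smul_dirac ha.neg.toNNReal x
  obtain ⟨C, hC⟩ := hS (Measure.sum fun i => ((a i).toNNReal : ℝ≥0∞) • Measure.dirac (x i))
  obtain ⟨D, hD⟩ := hS (Measure.sum fun i => ((-a i).toNNReal : ℝ≥0∞) • Measure.dirac (x i))
  refine ⟨C + D, fun h hh => ?_⟩
  have hsum := (hasSum_integral_sum_smul_dirac ha.toNNReal x h).sub
    (hasSum_integral_sum_smul_dirac ha.neg.toNNReal x h)
  simp only [← mul_sub, Real.coe_toNNReal', max_zero_sub_eq_self] at hsum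
  rw [hsum.tsum_eq]
  exact (abs_sub _ _).trans (add_le_add (hC h hh) (hD h hh))

theorem exists_norm_le_of_forall_integral_bounded {S : Set (E →ᵇ ℝ)}
    (hS : ∀ (μ : Measure E) [IsFiniteMeasure μ], ∃ C, ∀ h ∈ S, |∫ x, h x ∂μ| ≤ C) :
    ∃ C, ∀ h ∈ S, ‖h‖ ≤ C := by
  by_contra! hunb
  have : ∀ k : ℕ, ∃ h ∈ S, ∃ y, (k : ℝ) < |h y| := fun k => by
    obtain ⟨h, hS, hk⟩ := hunb k
    exact ⟨h, hS, h.exists_lt_abs_apply k.cast_nonneg hk⟩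
  choose h hhS y hy using this
  obtain ⟨C, hC⟩ := exists_abs_le_of_forall_bounded_tsum_mul (fun k i => h k (y i))
    (fun k => ⟨‖h k‖, fun i => (h k).norm_coe_le_norm (y i)⟩)
    (fun a => (exists_bound_tsum_mul_of_forall_integral_bounded hS y
      (lp.summable_norm_of_one a).of_norm).imp fun C hC k => hC (h k) (hhS k))
  obtain ⟨k, hk⟩ := exists_nat_gt C
  exact (hy k).not_ge ((hC k k).trans hk.le)

end FiniteMeasures

section TauSigma

variable {E : Type*} [MetricSpace E] [MeasurableSpace E] [BorelSpace E]

lemma tendsto_tauSigma_iff {ι : Type*} {l : Filter ι} {f : ι → E →ᵇ ℝ} {g : E →ᵇ ℝ} :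
    Tendsto f l (@nhds _ (tauSigma E) g) ↔
      ∀ s : SignedMeasure E, Tendsto (fun n => intSM' s (f n)) l (𝓝 (intSM' s g)) := by
  rw [tauSigma, nhds_iInf, tendsto_iInf]
  refine forall_congr' fun s => ?_
  rw [nhds_induced, tendsto_comap_iff]
  rfl

lemma continuous_intSM'_tauSigma (s : SignedMeasure E) :
    @Continuous _ _ (tauSigma E) _ fun h : E →ᵇ ℝ => intSM' s h :=
  continuous_iff_le_induced.mpr (iInf_le _ s)

lemma tendsto_apply_of_tendsto_tauSigma {ι : Type*} {l : Filter ι} {f : ι → E →ᵇ ℝ}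
    {g : E →ᵇ ℝ} (hfg : Tendsto f l (@nhds _ (tauSigma E) g)) (x : E) :
    Tendsto (fun n => f n x) l (𝓝 (g x)) := by
  simpa only [intSM'_toSignedMeasure, integral_dirac' _ _ (f _).continuous.stronglyMeasurable,
    integral_dirac' _ _ g.continuous.stronglyMeasurable]
    using tendsto_tauSigma_iff.mp hfg (Measure.dirac x).toSignedMeasure

lemma topology_le_tauSigma : (inferInstance : TopologicalSpace (E →ᵇ ℝ)) ≤ tauSigma E :=
  le_iInf fun s => continuous_iff_le_induced.mp (intSM'CLM s).continuous

lemma exists_abs_intSM'_le_of_isVonNBounded {S : Set (E →ᵇ ℝ)}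
    (hS : @Bornology.IsVonNBounded ℝ (E →ᵇ ℝ) _ _ _ (tauSigma E) S) (s : SignedMeasure E) :
    ∃ C, ∀ h ∈ S, |intSM' s h| ≤ C := by
  let φ := @ContinuousLinearMap.mk ℝ ℝ _ _ (RingHom.id ℝ) (E →ᵇ ℝ) (tauSigma E) _ ℝ _ _ _ _
    (intSM'CLM s).toLinearMap (continuous_intSM'_tauSigma s)
  obtain ⟨C, hC⟩ := (NormedSpace.image_isVonNBounded_iff ℝ).mp
    (@Bornology.IsVonNBounded.image _ _ ℝ ℝ _ _ _ _ _ _ (tauSigma E) _ _ _ _ _ hS φ)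
  exact ⟨C, fun h hh => (Real.norm_eq_abs _).symm.trans_le (hC h hh)⟩

lemma exists_norm_le_of_isVonNBounded_tauSigma {S : Set (E →ᵇ ℝ)}
    (hS : @Bornology.IsVonNBounded ℝ (E →ᵇ ℝ) _ _ _ (tauSigma E) S) :
    ∃ C, ∀ h ∈ S, ‖h‖ ≤ C :=
  exists_norm_le_of_forall_integral_bounded fun μ _ => by
    simpa only [intSM'_toSignedMeasure] using
      exists_abs_intSM'_le_of_isVonNBounded hS μ.toSignedMeasure

lemma isVonNBounded_tauSigma_of_norm_le {S : Set (E →ᵇ ℝ)} {C : ℝ} (hC : ∀ h ∈ S, ‖h‖ ≤ C) :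
    @Bornology.IsVonNBounded ℝ (E →ᵇ ℝ) _ _ _ (tauSigma E) S :=
  .of_topologicalSpace_le topology_le_tauSigma <| (NormedSpace.isVonNBounded_iff' ℝ).mpr ⟨C, hC⟩

lemma tendsto_tauSigma_of_norm_le_of_tendsto {ι : Type*} {l : Filter ι} [l.IsCountablyGenerated]
    {f : ι → E →ᵇ ℝ} {g : E →ᵇ ℝ} {C : ℝ}
    (hC : ∀ n, ‖f n‖ ≤ C) (hfg : ∀ x, Tendsto (fun n => f n x) l (𝓝 (g x))) :
    Tendsto f l (@nhds _ (tauSigma E) g) :=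
  tendsto_tauSigma_iff.mpr fun _ =>
    (tendsto_integral_of_norm_le_of_tendsto _ hC hfg).sub
      (tendsto_integral_of_norm_le_of_tendsto _ hC hfg)

end TauSigma

/-- A sequence in C_b(E) is (von Neumann) bounded and convergent to g in the
weak topology σ(C_b(E), ca(E)) iff it is sup-norm bounded and converges to g pointwise. -/
theorem stmt15 {E : Type*} [MetricSpace E] [MeasurableSpace E] [BorelSpace E]
    (f : ℕ → BoundedContinuousFunction E ℝ) (g : BoundedContinuousFunction E ℝ) :
    (@Bornology.IsVonNBounded ℝ (BoundedContinuousFunction E ℝ) _ _ _ (tauSigma E)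
        (Set.range f) ∧
      Tendsto f atTop (@nhds _ (tauSigma E) g)) ↔
      ((∃ C : ℝ, ∀ n, ‖f n‖ ≤ C) ∧
        ∀ x : E, Tendsto (fun n => f n x) atTop (𝓝 (g x))) := by
  constructor
  · rintro ⟨hbdd, hlim⟩
    obtain ⟨C, hC⟩ := exists_norm_le_of_isVonNBounded_tauSigma hbdd
    exact ⟨⟨C, fun n => hC _ (Set.mem_range_self n)⟩, tendsto_apply_of_tendsto_tauSigma hlim⟩
  · rintro ⟨⟨C, hC⟩, hpt⟩
    exact ⟨isVonNBounded_tauSigma_of_norm_le (Set.forall_mem_range.mpr hC),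
      tendsto_tauSigma_of_norm_le_of_tendsto hC hpt⟩
end
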